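/- Let f : ℝ^N → ℝ be twice continuously differentiable whose Hessian is Lipschitz continuous with constant L > 0 on the segment [x, x+s]. Let g = ∇f(x), let H be a symmetric N×N real matrix, and define the quadratic model m(d) = f(x) + ⟨g, d⟩ + ½⟨H d, d⟩. Let J be an M×N real matrix, n, t ∈ ℝ^N, s = n + t with s ≠ 0, y ∈ ℝ^M, λ ≥ 0, and constants κst, κntt, κfm, κρ ∈ (0,1) and κhs > 0. Suppose: (a) (H + λI)t + J^T y = −(g + (H + λI)n) and J t = 0; (b) t^T (H + λI) t ≥ 0; (c) ‖t‖ ≥ κst ‖s‖; (d) m(0) − m(s) ≥ κfm (m(n) − m(s)); (e) n^T t ≥ −½ κntt ‖t‖²; (f) ‖(H − ∇²f(x)) s‖ ≤ κhs ‖s‖²; and (g) λ ≥ (κfm κst² (1 − κntt))^{-1}(κhs + L + 2κρ) ‖s‖. Then f(x) − f(x+s) ≥ κρ ‖s‖³. -/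

import Mathlib

/-!
Taylor's theorem with an `L`-Lipschitz Hessian bounds the actual decrease from below by the
model decrease, up to `½‖(H - ∇²f(x)) s‖ ‖s‖ + (L/6)‖s‖³`. Testing the stationarity condition (a)
against `t` kills the multiplier term, since `J t = 0`, and leaves
`m(n) - m(s) = ½⟪(H + λI) t, t⟫ + ½λ‖t‖² + λ⟪n, t⟫ ≥ ½λ(1 - κntt)‖t‖²`. By (c), (d) and (g) the
model decrease `m(0) - m(s)` is then at least `½(κhs + L + 2κρ)‖s‖³`, which absorbs both error
terms.
-/

open scoped RealInnerProductSpace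

open Set in
theorem image_zero_le_image_one_of_deriv2_nonneg {φ φ' φ'' : ℝ → ℝ}
    (hφ : ∀ u, HasDerivAt φ (φ' u) u) (hφ' : ∀ u, HasDerivAt φ' (φ'' u) u)
    (h₀ : 0 ≤ φ' 0) (hφ''₀ : ∀ u ∈ Ioo (0 : ℝ) 1, 0 ≤ φ'' u) : φ 0 ≤ φ 1 := by
  have hmono' : MonotoneOn φ' (Icc 0 1) :=
    monotoneOn_of_hasDerivWithinAt_nonneg (convex_Icc 0 1)
      (fun u _ ↦ (hφ' u).continuousAt.continuousWithinAt)
      (fun u _ ↦ (hφ' u).hasDerivWithinAt) (by simpa using hφ''₀)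
  have hmono : MonotoneOn φ (Icc 0 1) :=
    monotoneOn_of_hasDerivWithinAt_nonneg (convex_Icc 0 1)
      (fun u _ ↦ (hφ u).continuousAt.continuousWithinAt)
      (fun u _ ↦ (hφ u).hasDerivWithinAt) fun u hu ↦ by
        rw [interior_Icc] at hu
        exact h₀.trans (hmono' (by simp) (Ioo_subset_Icc_self hu) hu.1.le)
  exact hmono (by simp) (by simp) zero_le_one

theorem hasDerivAt_apply_add_smul {E F : Type*} [NormedAddCommGroup E] [NormedSpace ℝ E]
    [NormedAddCommGroup F] [NormedSpace ℝ F] {f : E → F} (hf : Differentiable ℝ f)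
    (x s : E) (u : ℝ) :
    HasDerivAt (fun u : ℝ ↦ f (x + u • s)) (fderiv ℝ f (x + u • s) s) u := by
  have hline : HasDerivAt (fun u : ℝ ↦ x + u • s) s u := by
    simpa using ((hasDerivAt_id u).smul_const s).const_add x
  exact (hf _).hasFDerivAt.comp_hasDerivAt u hline

section Taylor

variable {E : Type*} [NormedAddCommGroup E] [InnerProductSpace ℝ E] [CompleteSpace E]

theorem ContDiff.differentiable_gradient {f : E → ℝ} (hf : ContDiff ℝ 2 f) :
    Differentiable ℝ (gradient f) :=
  ((InnerProductSpace.toDual ℝ E).symm.contDiff.comp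
    (hf.fderiv_right (by norm_num))).differentiable one_ne_zero

theorem apply_add_le_of_hessian_lipschitz {f : E → ℝ} (hf : ContDiff ℝ 2 f) {x s : E} {L : ℝ}
    (hlip : ∀ a ∈ segment ℝ x (x + s),
      ‖fderiv ℝ (gradient f) a - fderiv ℝ (gradient f) x‖ ≤ L * ‖a - x‖) :
    f (x + s) ≤ f x + ⟪gradient f x, s⟫
      + (1 / 2) * ⟪fderiv ℝ (gradient f) x s, s⟫ + L / 6 * ‖s‖ ^ 3 := by
  set G := fderiv ℝ (gradient f)
  set p := ⟪gradient f x, s⟫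
  set B := ⟪G x s, s⟫
  set C := L * ‖s‖ ^ 3
  have hgd := hf.differentiable_gradient
  have hφ : ∀ u : ℝ,
      HasDerivAt (fun u ↦ f x + u * p + u ^ 2 / 2 * B + u ^ 3 / 6 * C - f (x + u • s))
      (p + u * B + u ^ 2 / 2 * C - ⟪gradient f (x + u • s), s⟫) u := fun u ↦ by
    have hpoly := ((((hasDerivAt_id u).mul_const p).const_add (f x)).add
      (((hasDerivAt_pow 2 u).div_const 2).mul_const B)).add
      (((hasDerivAt_pow 3 u).div_const 6).mul_const C)
    have hf' := hasDerivAt_apply_add_smul (hf.differentiable two_ne_zero) x s u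
    rw [← inner_gradient_left] at hf'
    refine (hpoly.sub hf').congr_deriv ?_
    simp only [Nat.cast_ofNat]
    ring
  have hφ' : ∀ u : ℝ,
      HasDerivAt (fun u ↦ p + u * B + u ^ 2 / 2 * C - ⟪gradient f (x + u • s), s⟫)
      (B + u * C - ⟪G (x + u • s) s, s⟫) u := fun u ↦ by
    have hpoly := (((hasDerivAt_id u).mul_const B).const_add p).add
      (((hasDerivAt_pow 2 u).div_const 2).mul_const C)
    have hgrad := (hasDerivAt_apply_add_smul hgd x s u).inner ℝ (hasDerivAt_const u s)
    refine (hpoly.sub hgrad).congr_deriv ?_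
    simp only [Nat.cast_ofNat, inner_zero_right]
    ring
  have hφ'' : ∀ u ∈ Set.Ioo (0 : ℝ) 1, 0 ≤ B + u * C - ⟪G (x + u • s) s, s⟫ := by
    intro u hu
    have hmem : x + u • s ∈ segment ℝ x (x + s) := by
      rw [segment_eq_image']
      exact ⟨u, Set.Ioo_subset_Icc_self hu, by simp⟩
    have hgap : ⟪G (x + u • s) s, s⟫ - B ≤ u * C := calc
      ⟪G (x + u • s) s, s⟫ - B = ⟪(G (x + u • s) - G x) s, s⟫ := by
          rw [sub_apply, inner_sub_left]
      _ ≤ ‖G (x + u • s) - G x‖ * ‖s‖ * ‖s‖ :=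
          (real_inner_le_norm _ _).trans (by gcongr; exact ContinuousLinearMap.le_opNorm _ _)
      _ ≤ L * (u * ‖s‖) * ‖s‖ * ‖s‖ := by
          gcongr
          simpa [norm_smul, abs_of_pos hu.1] using hlip _ hmem
      _ = u * C := by ring
    linarith
  have hφ01 := image_zero_le_image_one_of_deriv2_nonneg hφ hφ' (by simp [p]) hφ''
  simp only [zero_mul, one_mul, zero_pow three_ne_zero, zero_smul, add_zero, one_smul] at hφ01
  linarith

end Taylor

section Tangential

variable {E F : Type*} [NormedAddCommGroup E] [InnerProductSpace ℝ E] [CompleteSpace E]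
  [NormedAddCommGroup F] [InnerProductSpace ℝ F] [CompleteSpace F]

theorem quadratic_sub_eq_of_tangential_stationarity {H : E →L[ℝ] E} (hH : IsSelfAdjoint H)
    {J : E →L[ℝ] F} {g n t : E} {y : F} {lam : ℝ}
    (hstat : (H + lam • 1) t + ContinuousLinearMap.adjoint J y = -(g + (H + lam • 1) n))
    (hnull : J t = 0) :
    (⟪g, n⟫ + (1 / 2) * ⟪H n, n⟫) - (⟪g, n + t⟫ + (1 / 2) * ⟪H (n + t), n + t⟫)
      = (1 / 2) * ⟪(H + lam • 1) t, t⟫ + lam / 2 * ‖t‖ ^ 2 + lam * ⟪n, t⟫ := by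
  have hsymm : ⟪H t, n⟫ = ⟪H n, t⟫ := (hH.isSymmetric t n).trans (real_inner_comm _ _)
  have hstat_t := congrArg (⟪·, t⟫) hstat
  simp only [inner_add_left, inner_neg_left, ContinuousLinearMap.adjoint_inner_left, hnull,
    inner_zero_right, add_apply, smul_apply, one_apply_eq_self, real_inner_smul_left] at hstat_t ⊢
  simp only [map_add, inner_add_left, inner_add_right, hsymm, real_inner_self_eq_norm_sq]
    at hstat_t ⊢
  linarith

theorem le_quadratic_sub_of_tangential_stationarity {H : E →L[ℝ] E} (hH : IsSelfAdjoint H)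
    {J : E →L[ℝ] F} {g n t : E} {y : F} {lam κ : ℝ} (hlam : 0 ≤ lam)
    (hstat : (H + lam • 1) t + ContinuousLinearMap.adjoint J y = -(g + (H + lam • 1) n))
    (hnull : J t = 0) (hcurv : 0 ≤ ⟪(H + lam • 1) t, t⟫)
    (hnt : -(1 / 2) * κ * ‖t‖ ^ 2 ≤ ⟪n, t⟫) :
    lam / 2 * (1 - κ) * ‖t‖ ^ 2
      ≤ (⟪g, n⟫ + (1 / 2) * ⟪H n, n⟫) - (⟪g, n + t⟫ + (1 / 2) * ⟪H (n + t), n + t⟫) := by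
  rw [quadratic_sub_eq_of_tangential_stationarity hH hstat hnull]
  nlinarith [mul_le_mul_of_nonneg_left hnt hlam]

end Tangential

theorem half_mul_pow_three_le_of_inv_mul_le {κst κntt κfm lam K r τ Δ : ℝ} (hκst : 0 < κst)
    (hκntt : κntt < 1) (hκfm : 0 < κfm) (hlam : 0 ≤ lam) (hr : 0 ≤ r) (hτ : κst * r ≤ τ)
    (hΔ : κfm * (lam / 2 * (1 - κntt) * τ ^ 2) ≤ Δ)
    (hlamlb : (κfm * κst ^ 2 * (1 - κntt))⁻¹ * K * r ≤ lam) :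
    K / 2 * r ^ 3 ≤ Δ := by
  have hc : 0 < κfm * κst ^ 2 * (1 - κntt) := by have := sub_pos.2 hκntt; positivity
  have hKr : K * r ≤ κfm * κst ^ 2 * (1 - κntt) * lam := by
    rw [mul_assoc, inv_mul_le_iff₀ hc] at hlamlb
    exact hlamlb
  have hτ2 : (κst * r) ^ 2 ≤ τ ^ 2 := pow_le_pow_left₀ (by positivity) hτ 2
  have hcoef : 0 ≤ κfm * (lam / 2 * (1 - κntt)) := by have := sub_pos.2 hκntt; positivity
  calc K / 2 * r ^ 3 = K * r * r ^ 2 / 2 := by ring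
    _ ≤ κfm * κst ^ 2 * (1 - κntt) * lam * r ^ 2 / 2 := by gcongr
    _ = κfm * (lam / 2 * (1 - κntt)) * (κst * r) ^ 2 := by ring
    _ ≤ κfm * (lam / 2 * (1 - κntt)) * τ ^ 2 := by gcongr
    _ ≤ Δ := by linarith

theorem f_iteration_sufficient_decrease_general (N M : ℕ)
    (f : EuclideanSpace ℝ (Fin N) → ℝ) (hf : ContDiff ℝ 2 f)
    (x s : EuclideanSpace ℝ (Fin N)) (L : ℝ) (hL : 0 < L)
    (hlip : ∀ a ∈ segment ℝ x (x + s), ∀ b ∈ segment ℝ x (x + s),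
      ‖fderiv ℝ (gradient f) a - fderiv ℝ (gradient f) b‖ ≤ L * ‖a - b‖)
    (H : EuclideanSpace ℝ (Fin N) →L[ℝ] EuclideanSpace ℝ (Fin N))
    (hHsa : IsSelfAdjoint H)
    (m : EuclideanSpace ℝ (Fin N) → ℝ)
    (hm : ∀ d, m d = f x + ⟪gradient f x, d⟫ + (1 / 2) * ⟪H d, d⟫)
    (J : EuclideanSpace ℝ (Fin N) →L[ℝ] EuclideanSpace ℝ (Fin M))
    (n t : EuclideanSpace ℝ (Fin N)) (hs : s = n + t)
    (y : EuclideanSpace ℝ (Fin M)) (lam : ℝ) (hlam : 0 ≤ lam)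
    (κst κntt κfm κρ : ℝ)
    (hκst : κst ∈ Set.Ioo (0 : ℝ) 1) (hκntt : κntt ∈ Set.Ioo (0 : ℝ) 1)
    (hκfm : κfm ∈ Set.Ioo (0 : ℝ) 1)
    (κhs : ℝ)
    -- (a) stationarity of the tangential subproblem
    (hstat : (H + lam • (1 : EuclideanSpace ℝ (Fin N) →L[ℝ] EuclideanSpace ℝ (Fin N))) t
        + ContinuousLinearMap.adjoint J y
      = -(gradient f x
        + (H + lam • (1 : EuclideanSpace ℝ (Fin N) →L[ℝ] EuclideanSpace ℝ (Fin N))) n))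
    (hnull : J t = 0)
    -- (b) nonnegative curvature along t
    (hcurv : 0 ≤ ⟪(H + lam • (1 : EuclideanSpace ℝ (Fin N) →L[ℝ] EuclideanSpace ℝ (Fin N))) t, t⟫)
    -- (c)
    (hts : ‖t‖ ≥ κst * ‖s‖)
    -- (d)
    (hmred : m 0 - m s ≥ κfm * (m n - m s))
    -- (e)
    (hnt : ⟪n, t⟫ ≥ -(1 / 2) * κntt * ‖t‖ ^ 2)
    -- (f)
    (hHs : ‖(H - fderiv ℝ (gradient f) x) s‖ ≤ κhs * ‖s‖ ^ 2)
    -- (g)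
    (hlamlb : lam ≥ (κfm * κst ^ 2 * (1 - κntt))⁻¹ * (κhs + L + 2 * κρ) * ‖s‖) :
    f x - f (x + s) ≥ κρ * ‖s‖ ^ 3 := by
  have htaylor := apply_add_le_of_hessian_lipschitz hf
    fun a ha ↦ hlip a ha x (left_mem_segment ℝ x (x + s))
  have htangential : lam / 2 * (1 - κntt) * ‖t‖ ^ 2 ≤ m n - m s := by
    have hq := le_quadratic_sub_of_tangential_stationarity hHsa hlam hstat hnull hcurv hnt
    rw [hm, hm, hs]
    linarith
  have hmodel : (κhs + L + 2 * κρ) / 2 * ‖s‖ ^ 3 ≤ m 0 - m s :=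
    half_mul_pow_three_le_of_inv_mul_le hκst.1 hκntt.2 hκfm.1 hlam (norm_nonneg s) hts
      (hmred.trans' (mul_le_mul_of_nonneg_left htangential hκfm.1.le)) hlamlb
  have hhessian : ⟪fderiv ℝ (gradient f) x s, s⟫ - ⟪H s, s⟫ ≤ κhs * ‖s‖ ^ 3 := calc
    _ = -⟪(H - fderiv ℝ (gradient f) x) s, s⟫ := by rw [sub_apply, inner_sub_left]; ring
    _ ≤ ‖(H - fderiv ℝ (gradient f) x) s‖ * ‖s‖ :=
        (neg_le_abs _).trans (abs_real_inner_le_norm _ _)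
    _ ≤ κhs * ‖s‖ ^ 2 * ‖s‖ := by gcongr
    _ = κhs * ‖s‖ ^ 3 := by ring
  simp only [hm, inner_zero_right, map_zero, mul_zero, add_zero] at hmodel
  linarith [mul_nonneg hL.le (pow_nonneg (norm_nonneg s) 3)]

/-- Lemma 3.20: in an F-iteration, if the trust-region multiplier `λ` of the
tangential subproblem is sufficiently large relative to the trial step `s = n + t`, then the
actual objective decrease satisfies `f(x) - f(x+s) ≥ κρ‖s‖³`.  Here `H` is a self-adjoint
operator (symmetric matrix) on `ℝ^N`, `J` is the constraint Jacobian (an `M×N` matrix, as a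
linear operator), and `∇²f(x) = fderiv ℝ (gradient f) x`. -/
theorem f_iteration_sufficient_decrease (N M : ℕ)
    (f : EuclideanSpace ℝ (Fin N) → ℝ) (hf : ContDiff ℝ 2 f)
    (x s : EuclideanSpace ℝ (Fin N)) (L : ℝ) (hL : 0 < L)
    (hlip : ∀ a ∈ segment ℝ x (x + s), ∀ b ∈ segment ℝ x (x + s),
      ‖fderiv ℝ (gradient f) a - fderiv ℝ (gradient f) b‖ ≤ L * ‖a - b‖)
    (H : EuclideanSpace ℝ (Fin N) →L[ℝ] EuclideanSpace ℝ (Fin N))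
    (hHsa : IsSelfAdjoint H)
    (m : EuclideanSpace ℝ (Fin N) → ℝ)
    (hm : ∀ d, m d = f x + ⟪gradient f x, d⟫ + (1 / 2) * ⟪H d, d⟫)
    (J : EuclideanSpace ℝ (Fin N) →L[ℝ] EuclideanSpace ℝ (Fin M))
    (n t : EuclideanSpace ℝ (Fin N)) (hs : s = n + t) (hsne : s ≠ 0)
    (y : EuclideanSpace ℝ (Fin M)) (lam : ℝ) (hlam : 0 ≤ lam)
    (κst κntt κfm κρ : ℝ)
    (hκst : κst ∈ Set.Ioo (0 : ℝ) 1) (hκntt : κntt ∈ Set.Ioo (0 : ℝ) 1)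
    (hκfm : κfm ∈ Set.Ioo (0 : ℝ) 1) (hκρ : κρ ∈ Set.Ioo (0 : ℝ) 1)
    (κhs : ℝ) (hκhs : 0 < κhs)
    -- (a) stationarity of the tangential subproblem
    (hstat : (H + lam • (1 : EuclideanSpace ℝ (Fin N) →L[ℝ] EuclideanSpace ℝ (Fin N))) t
        + ContinuousLinearMap.adjoint J y
      = -(gradient f x
        + (H + lam • (1 : EuclideanSpace ℝ (Fin N) →L[ℝ] EuclideanSpace ℝ (Fin N))) n))
    (hnull : J t = 0)
    -- (b) nonnegative curvature along t
    (hcurv : 0 ≤ ⟪(H + lam • (1 : EuclideanSpace ℝ (Fin N) →L[ℝ] EuclideanSpace ℝ (Fin N))) t, t⟫)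
    -- (c)
    (hts : ‖t‖ ≥ κst * ‖s‖)
    -- (d)
    (hmred : m 0 - m s ≥ κfm * (m n - m s))
    -- (e)
    (hnt : ⟪n, t⟫ ≥ -(1 / 2) * κntt * ‖t‖ ^ 2)
    -- (f)
    (hHs : ‖(H - fderiv ℝ (gradient f) x) s‖ ≤ κhs * ‖s‖ ^ 2)
    -- (g)
    (hlamlb : lam ≥ (κfm * κst ^ 2 * (1 - κntt))⁻¹ * (κhs + L + 2 * κρ) * ‖s‖) :
    f x - f (x + s) ≥ κρ * ‖s‖ ^ 3 :=
  f_iteration_sufficient_decrease_general N M f hf x s L hL hlip H hHsa m hm J n t hs y lam hlam κst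
    κntt κfm κρ hκst hκntt hκfm κhs hstat hnull hcurv hts hmred hnt hHs hlamlb
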